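/- Let Λ = (0,∞)³, Λ_a = {(x,y,z) ∈ Λ : x > z}, Λ_b = {(x,y,z) ∈ Λ : z > x}, and let Λ* = {(α,β,γ) ∈ ℝ³ : max(α,γ) < β < α + γ}, Λ*_a = {(α,β,γ) ∈ Λ* : α < γ}, Λ*_b = {(α,β,γ) ∈ Λ* : α > γ}. Define F̃ : Λ × Λ → ℝ⁶ by F̃(x,y,z,α,β,γ) = (x−z, z, y, α, α+γ, β) if x > z and F̃(x,y,z,α,β,γ) = (y, x, z−x, β, α+γ, γ) if z > x. Then F̃ maps Λ_a × Λ* bijectively onto Λ × Λ*_a, and F̃ maps Λ_b × Λ* bijectively onto Λ × Λ*_b. -/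

import Mathlib

/-! On `Λ_a` (resp. `Λ_b`) the map `F̃` agrees with an invertible linear map of `ℝ⁶`,
`(x, a) ↦ (C⁻¹x, Cᵀa)`. A bijection of `ℝ⁶` restricts to a bijection `s → t` as soon as
it sends exactly the points of `s` into `t`, and for these branches that is a comparison of
two systems of strict linear inequalities. -/

open Set

/-- The positive cone `Λ = (0,∞)³`. -/
def posCone3 : Set (ℝ × ℝ × ℝ) := {v | 0 < v.1 ∧ 0 < v.2.1 ∧ 0 < v.2.2}

/-- `Λ_a = {(x,y,z) ∈ Λ : x > z}`. -/
def casConeA : Set (ℝ × ℝ × ℝ) := {v ∈ posCone3 | v.2.2 < v.1}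
/-- `Λ_b = {(x,y,z) ∈ Λ : z > x}`. -/
def casConeB : Set (ℝ × ℝ × ℝ) := {v ∈ posCone3 | v.1 < v.2.2}

/-- `Λ* = {(α,β,γ) : max(α,γ) < β < α + γ}`. -/
def casConeS : Set (ℝ × ℝ × ℝ) := {v | max v.1 v.2.2 < v.2.1 ∧ v.2.1 < v.1 + v.2.2}

/-- `Λ*_a = {(α,β,γ) ∈ Λ* : α < γ}`. -/
def casConeSA : Set (ℝ × ℝ × ℝ) := {v ∈ casConeS | v.1 < v.2.2}
/-- `Λ*_b = {(α,β,γ) ∈ Λ* : α > γ}`. -/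
def casConeSB : Set (ℝ × ℝ × ℝ) := {v ∈ casConeS | v.2.2 < v.1}

/-- The natural extension map `F̃` of the Cassaigne algorithm. -/
noncomputable def casExt : (ℝ × ℝ × ℝ) × (ℝ × ℝ × ℝ) → (ℝ × ℝ × ℝ) × (ℝ × ℝ × ℝ)
  | ((x, y, z), (a, b, c)) =>
    if z < x then ((x - z, z, y), (a, a + c, b))
    else ((y, x, z - x), (b, a + c, c))

def casBranchA : (ℝ × ℝ × ℝ) × (ℝ × ℝ × ℝ) ≃ (ℝ × ℝ × ℝ) × (ℝ × ℝ × ℝ) where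
  toFun | ((x, y, z), (a, b, c)) => ((x - z, z, y), (a, a + c, b))
  invFun | ((u, v, w), (p, q, r)) => ((u + v, w, v), (p, r, q - p))
  left_inv := by rintro ⟨⟨x, y, z⟩, ⟨a, b, c⟩⟩; simp
  right_inv := by rintro ⟨⟨u, v, w⟩, ⟨p, q, r⟩⟩; simp

def casBranchB : (ℝ × ℝ × ℝ) × (ℝ × ℝ × ℝ) ≃ (ℝ × ℝ × ℝ) × (ℝ × ℝ × ℝ) where
  toFun | ((x, y, z), (a, b, c)) => ((y, x, z - x), (b, a + c, c))
  invFun | ((u, v, w), (p, q, r)) => ((v, u, w + v), (q - r, p, r))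
  left_inv := by rintro ⟨⟨x, y, z⟩, ⟨a, b, c⟩⟩; simp
  right_inv := by rintro ⟨⟨u, v, w⟩, ⟨p, q, r⟩⟩; simp

theorem eqOn_casBranchA_casExt : EqOn casBranchA casExt (casConeA ×ˢ univ) := by
  rintro ⟨⟨x, y, z⟩, _⟩ ⟨⟨_, hzx⟩, _⟩
  simp only [casExt, if_pos (show z < x from hzx)]
  rfl

theorem eqOn_casBranchB_casExt : EqOn casBranchB casExt (casConeB ×ˢ univ) := by
  rintro ⟨⟨x, y, z⟩, _⟩ ⟨⟨_, hxz⟩, _⟩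
  simp only [casExt, if_neg (show ¬z < x from not_lt.2 (le_of_lt hxz))]
  rfl

theorem casBranchA_mem_iff (v : (ℝ × ℝ × ℝ) × (ℝ × ℝ × ℝ)) :
    casBranchA v ∈ posCone3 ×ˢ casConeSA ↔ v ∈ casConeA ×ˢ casConeS := by
  obtain ⟨⟨x, y, z⟩, ⟨a, b, c⟩⟩ := v
  simp only [casBranchA, Equiv.coe_fn_mk, posCone3, casConeA, casConeS, casConeSA, mem_prod,
    mem_ofPred_eq, max_lt_iff]
  constructor
  · rintro ⟨⟨_, _, _⟩, ⟨⟨_, _⟩, _⟩, _⟩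
    refine ⟨⟨⟨?_, ?_, ?_⟩, ?_⟩, ⟨?_, ?_⟩, ?_⟩ <;> linarith
  · rintro ⟨⟨⟨_, _, _⟩, _⟩, ⟨_, _⟩, _⟩
    refine ⟨⟨?_, ?_, ?_⟩, ⟨⟨?_, ?_⟩, ?_⟩, ?_⟩ <;> linarith

theorem casBranchB_mem_iff (v : (ℝ × ℝ × ℝ) × (ℝ × ℝ × ℝ)) :
    casBranchB v ∈ posCone3 ×ˢ casConeSB ↔ v ∈ casConeB ×ˢ casConeS := by
  obtain ⟨⟨x, y, z⟩, ⟨a, b, c⟩⟩ := v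
  simp only [casBranchB, Equiv.coe_fn_mk, posCone3, casConeB, casConeS, casConeSB, mem_prod,
    mem_ofPred_eq, max_lt_iff]
  constructor
  · rintro ⟨⟨_, _, _⟩, ⟨⟨_, _⟩, _⟩, _⟩
    refine ⟨⟨⟨?_, ?_, ?_⟩, ?_⟩, ⟨?_, ?_⟩, ?_⟩ <;> linarith
  · rintro ⟨⟨⟨_, _, _⟩, _⟩, ⟨_, _⟩, _⟩
    refine ⟨⟨?_, ?_, ?_⟩, ⟨⟨?_, ?_⟩, ?_⟩, ?_⟩ <;> linarith

/-- The Cassaigne natural extension maps `Λ_a × Λ*` bijectively onto `Λ × Λ*_a`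
and `Λ_b × Λ*` bijectively onto `Λ × Λ*_b`. -/
theorem stmt_10 :
    Set.BijOn casExt (casConeA ×ˢ casConeS) (posCone3 ×ˢ casConeSA) ∧
    Set.BijOn casExt (casConeB ×ˢ casConeS) (posCone3 ×ˢ casConeSB) :=
  ⟨(casBranchA.bijOn casBranchA_mem_iff).congr
      (eqOn_casBranchA_casExt.mono (prod_mono_right (subset_univ _))),
    (casBranchB.bijOn casBranchB_mem_iff).congr
      (eqOn_casBranchB_casExt.mono (prod_mono_right (subset_univ _)))⟩
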